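/- arXiv:2110.02714 — 3 statements merged into one kernel-verified Lean document; each statement's English description precedes it below -/
import Mathlib

section
/- Let (μ_n) be probability measures on [0,1] with means θ_n → θ and suppose ∫ g dμ_n → 0 for a fixed continuous g: [0,1]→[0,∞) with g>0 on (0,1) and g(0)=g(1)=0. Then every weak limit point of (μ_n) equals (1−θ)δ_0 + θδ_1; in particular μ_n ⇒ (1−θ)δ_0 + θδ_1. -/
open MeasureTheory

/-- The endpoint `0` of `[0,1]`. -/
noncomputable def pt0 : Set.Icc (0 : ℝ) 1 := ⟨0, Set.left_mem_Icc.mpr zero_le_one⟩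
/-- The endpoint `1` of `[0,1]`. -/
noncomputable def pt1 : Set.Icc (0 : ℝ) 1 := ⟨1, Set.right_mem_Icc.mpr zero_le_one⟩

/-!
Write `f = (f - L) + L`, where `L` is the affine function agreeing with `f` at `0` and `1`.
The integrals of `L` are affine in the means, hence converge to `(1 - θ) f(0) + θ f(1)`. The
remainder `f - L` vanishes at both endpoints, so by compactness `|f - L| ≤ ε + C g` for every
`ε > 0`, and its integrals tend to `0` because those of `g` do. Limit points are then identified
by continuity of `ν ↦ ∫ f dν` for the weak topology.
-/

open Filter Topology BoundedContinuousFunction unitInterval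

section ProbabilityMeasure

variable {X : Type*} [TopologicalSpace X] [MeasurableSpace X] [OpensMeasurableSpace X]

theorem integral_eq_of_mapClusterPt_of_tendsto {ι : Type*} {l : Filter ι}
    {μ : ι → ProbabilityMeasure X} {ν : ProbabilityMeasure X} (hν : MapClusterPt ν l μ)
    (f : X →ᵇ ℝ) {c : ℝ} (hf : Tendsto (fun i => ∫ x, f x ∂(μ i : Measure X)) l (𝓝 c)) :
    ∫ x, f x ∂(ν : Measure X) = c := by
  have hcont := (ProbabilityMeasure.continuous_integral_boundedContinuousFunction f).continuousAt
    (x := ν)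
  have hcluster : MapClusterPt (∫ x, f x ∂(ν : Measure X)) l
      (fun i => ∫ x, f x ∂(μ i : Measure X)) := hν.continuousAt_comp hcont
  exact eq_of_nhds_neBot (ClusterPt.mono hcluster hf)

end ProbabilityMeasure

section Domination

variable {X : Type*} [TopologicalSpace X] [CompactSpace X]

theorem ContinuousMap.exists_abs_le_add_mul (h g : C(X, ℝ)) (hg : 0 ≤ g)
    (hpos : ∀ x, h x ≠ 0 → 0 < g x) {ε : ℝ} (hε : 0 < ε) :
    ∃ C, 0 ≤ C ∧ ∀ x, |h x| ≤ ε + C * g x := by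
  -- `g` is bounded below by some `δ > 0` on the compact set where `|h| ≥ ε`.
  obtain ⟨δ, hδ, hδg⟩ := (isClosed_le continuous_const h.continuous.abs).isCompact.exists_forall_le'
    g.continuous.continuousOn fun x (hx : ε ≤ |h x|) => hpos x (abs_pos.mp (hε.trans_le hx))
  refine ⟨‖h‖ / δ, by positivity, fun x => ?_⟩
  have hCg : 0 ≤ ‖h‖ / δ * g x := mul_nonneg (by positivity) (hg x)
  by_cases hx : ε ≤ |h x|
  · calc |h x| ≤ ‖h‖ / δ * δ := by
          rw [div_mul_cancel₀ _ hδ.ne', ← Real.norm_eq_abs]; exact h.norm_coe_le_norm x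
      _ ≤ ‖h‖ / δ * g x := by gcongr; exact hδg x hx
      _ ≤ ε + ‖h‖ / δ * g x := by linarith
  · linarith [not_le.mp hx]

variable [MeasurableSpace X] [OpensMeasurableSpace X]

theorem ContinuousMap.integrable (f : C(X, ℝ)) (μ : Measure X) [IsFiniteMeasure μ] :
    Integrable f μ :=
  (BoundedContinuousFunction.mkOfCompact f).integrable μ

theorem tendsto_integral_nhds_zero_of_pos_on_support {ι : Type*} {l : Filter ι}
    (μ : ι → ProbabilityMeasure X) {h g : C(X, ℝ)} (hg : 0 ≤ g) (hpos : ∀ x, h x ≠ 0 → 0 < g x)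
    (hgint : Tendsto (fun i => ∫ x, g x ∂(μ i : Measure X)) l (𝓝 0)) :
    Tendsto (fun i => ∫ x, h x ∂(μ i : Measure X)) l (𝓝 0) := by
  rw [Metric.tendsto_nhds]
  intro ε hε
  obtain ⟨C, hC, hbound⟩ := h.exists_abs_le_add_mul g hg hpos (half_pos hε)
  have hCg : Tendsto (fun i => C * ∫ x, g x ∂(μ i : Measure X)) l (𝓝 0) := by
    simpa using hgint.const_mul C
  filter_upwards [hCg.eventually_lt_const (half_pos hε)] with i hi
  have hint := (g.integrable (μ i)).const_mul C
  calc dist (∫ x, h x ∂(μ i : Measure X)) 0 ≤ ∫ x, |h x| ∂(μ i : Measure X) := by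
        simpa [Real.dist_eq] using abs_integral_le_integral_abs
    _ ≤ ∫ x, (ε / 2 + C * g x) ∂(μ i : Measure X) :=
        integral_mono (h.integrable _).abs ((integrable_const _).add hint) hbound
    _ = ε / 2 + C * ∫ x, g x ∂(μ i : Measure X) := by
        rw [integral_add (integrable_const _) hint, integral_const_mul]; simp
    _ < ε := by linarith

end Domination

theorem pos_of_ne_zero_of_endpoints {g h : I → ℝ}
    (hgpos : ∀ x : I, 0 < (x : ℝ) → (x : ℝ) < 1 → 0 < g x) (h0 : h pt0 = 0) (h1 : h pt1 = 0)
    (x : I) (hx : h x ≠ 0) : 0 < g x := by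
  obtain ⟨x, hx0, hx1⟩ := x
  rcases hx0.eq_or_lt with rfl | hx0
  · exact absurd h0 hx
  rcases hx1.eq_or_lt with rfl | hx1
  · exact absurd h1 hx
  exact hgpos _ hx0 hx1

noncomputable def affineInterp (f : C(I, ℝ)) : C(I, ℝ) where
  toFun x := (1 - x) * f pt0 + x * f pt1
  continuous_toFun := by fun_prop

theorem sub_affineInterp_pt0 (f : C(I, ℝ)) : (f - affineInterp f) pt0 = 0 := by
  simp [affineInterp, pt0]

theorem sub_affineInterp_pt1 (f : C(I, ℝ)) : (f - affineInterp f) pt1 = 0 := by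
  simp [affineInterp, pt1]

theorem integral_affineInterp (f : C(I, ℝ)) (ν : Measure I) [IsProbabilityMeasure ν] :
    ∫ x, affineInterp f x ∂ν = (1 - ∫ x, (x : ℝ) ∂ν) * f pt0 + (∫ x, (x : ℝ) ∂ν) * f pt1 := by
  have hx : Integrable (fun x : I => (x : ℝ)) ν := (ContinuousMap.mk Subtype.val).integrable ν
  have hx' : Integrable (fun x : I => (1 - (x : ℝ)) * f pt0) ν :=
    (ContinuousMap.mk fun x : I => (1 - (x : ℝ)) * f pt0).integrable ν
  simp only [affineInterp, ContinuousMap.coe_mk]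
  rw [integral_add hx' (hx.mul_const _),
    integral_mul_const, integral_mul_const, integral_sub (integrable_const 1) hx]
  simp

theorem tendsto_integral_of_tendsto_mean {ι : Type*} {l : Filter ι} {θ : ℝ}
    (μ : ι → ProbabilityMeasure I) (g : C(I, ℝ)) (hg0 : g pt0 = 0) (hg1 : g pt1 = 0)
    (hgpos : ∀ x : I, 0 < (x : ℝ) → (x : ℝ) < 1 → 0 < g x)
    (hmean : Tendsto (fun i => ∫ x, (x : ℝ) ∂(μ i : Measure I)) l (𝓝 θ))
    (hgint : Tendsto (fun i => ∫ x, g x ∂(μ i : Measure I)) l (𝓝 0)) (f : C(I, ℝ)) :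
    Tendsto (fun i => ∫ x, f x ∂(μ i : Measure I)) l (𝓝 ((1 - θ) * f pt0 + θ * f pt1)) := by
  have hg : 0 ≤ g := fun x =>
    (eq_or_ne (g x) 0).elim ge_of_eq fun hx => (pos_of_ne_zero_of_endpoints hgpos hg0 hg1 x hx).le
  have hrem := tendsto_integral_nhds_zero_of_pos_on_support μ hg
    (pos_of_ne_zero_of_endpoints hgpos (sub_affineInterp_pt0 f) (sub_affineInterp_pt1 f)) hgint
  have hlin : Tendsto (fun i => ∫ x, affineInterp f x ∂(μ i : Measure I)) l
      (𝓝 ((1 - θ) * f pt0 + θ * f pt1)) := by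
    simp_rw [integral_affineInterp]
    exact ((tendsto_const_nhds.sub hmean).mul_const _).add (hmean.mul_const _)
  convert hrem.add hlin using 2 with i
  · rw [← integral_add ((f - affineInterp f).integrable _) ((affineInterp f).integrable _)]
    simp
  · ring

theorem stmt14_general (θ : ℝ)
    (μ : ℕ → ProbabilityMeasure (Set.Icc (0 : ℝ) 1))
    (g : C(Set.Icc (0 : ℝ) 1, ℝ))
    (hg0 : g pt0 = 0) (hg1 : g pt1 = 0)
    (hgpos : ∀ x : Set.Icc (0 : ℝ) 1, 0 < (x : ℝ) → (x : ℝ) < 1 → 0 < g x)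
    (hmean : Filter.Tendsto (fun n => ∫ x, (x : ℝ) ∂(μ n : Measure (Set.Icc (0 : ℝ) 1)))
      Filter.atTop (nhds θ))
    (hgint : Filter.Tendsto (fun n => ∫ x, g x ∂(μ n : Measure (Set.Icc (0 : ℝ) 1)))
      Filter.atTop (nhds 0)) :
    (∀ ν : ProbabilityMeasure (Set.Icc (0 : ℝ) 1),
      MapClusterPt ν Filter.atTop μ →
      ∀ f : C(Set.Icc (0 : ℝ) 1, ℝ),
        (∫ x, f x ∂(ν : Measure (Set.Icc (0 : ℝ) 1)))
          = (1 - θ) * f pt0 + θ * f pt1) ∧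
    (∀ f : C(Set.Icc (0 : ℝ) 1, ℝ),
      Filter.Tendsto (fun n => ∫ x, f x ∂(μ n : Measure (Set.Icc (0 : ℝ) 1)))
        Filter.atTop (nhds ((1 - θ) * f pt0 + θ * f pt1))) := by
  have hlim := tendsto_integral_of_tendsto_mean μ g hg0 hg1 hgpos hmean hgint
  exact ⟨fun ν hν f => integral_eq_of_mapClusterPt_of_tendsto hν (mkOfCompact f) (hlim f), hlim⟩

/-- Abstract clustering step. If probability measures `μ_n` on `[0,1]` have means
converging to `θ` and `∫ g dμ_n → 0` for a fixed continuous `g ≥ 0` vanishing exactly on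
`{0,1}`, then every weak limit point of `(μ_n)` equals `(1−θ)δ_0 + θδ_1`; in particular
`μ_n ⇒ (1−θ)δ_0 + θδ_1` (formulated via test functions). -/
theorem stmt14 (θ : ℝ) (hθ : θ ∈ Set.Icc (0 : ℝ) 1)
    (μ : ℕ → ProbabilityMeasure (Set.Icc (0 : ℝ) 1))
    (g : C(Set.Icc (0 : ℝ) 1, ℝ))
    (hg0 : g pt0 = 0) (hg1 : g pt1 = 0)
    (hgpos : ∀ x : Set.Icc (0 : ℝ) 1, 0 < (x : ℝ) → (x : ℝ) < 1 → 0 < g x)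
    (hmean : Filter.Tendsto (fun n => ∫ x, (x : ℝ) ∂(μ n : Measure (Set.Icc (0 : ℝ) 1)))
      Filter.atTop (nhds θ))
    (hgint : Filter.Tendsto (fun n => ∫ x, g x ∂(μ n : Measure (Set.Icc (0 : ℝ) 1)))
      Filter.atTop (nhds 0)) :
    (∀ ν : ProbabilityMeasure (Set.Icc (0 : ℝ) 1),
      MapClusterPt ν Filter.atTop μ →
      ∀ f : C(Set.Icc (0 : ℝ) 1, ℝ),
        (∫ x, f x ∂(ν : Measure (Set.Icc (0 : ℝ) 1)))
          = (1 - θ) * f pt0 + θ * f pt1) ∧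
    (∀ f : C(Set.Icc (0 : ℝ) 1, ℝ),
      Filter.Tendsto (fun n => ∫ x, f x ∂(μ n : Measure (Set.Icc (0 : ℝ) 1)))
        Filter.atTop (nhds ((1 - θ) * f pt0 + θ * f pt1))) :=
  stmt14_general θ μ g hg0 hg1 hgpos hmean hgint
end

section
/- Let μ_n be probability measures on [0,1]² with first marginal means ∫x dμ_n → θ, such that the first marginals converge weakly to (1−θ)δ_0 + θδ_1, and ∫ xy dμ_n → θ as well as ∫(1−x)(1−y) dμ_n → 1−θ. Then μ_n converges weakly to (1−θ)δ_{(0,0)} + θδ_{(1,1)}. -/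
open MeasureTheory

/-!
The function `x (1 - y) + y (1 - x)` on `[0,1]²` is nonnegative, vanishes exactly at `(0,0)` and
`(1,1)`, and its integral is `1 - ∫ xy - ∫ (1-x)(1-y)`, which tends to `1 - θ - (1 - θ) = 0`.
On a compact space, a continuous function vanishing wherever such a penalty function vanishes is
bounded by `ε + C · penalty` for every `ε > 0`, so its integrals tend to `0` as well. Applied to
`f - f(0,0) (1-x)(1-y) - f(1,1) xy`, this gives the limit `(1-θ) f(0,0) + θ f(1,1)`.
-/

open Filter Topology

section Penalty

variable {X : Type*} [TopologicalSpace X] [CompactSpace X] {h φ : X → ℝ}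

theorem exists_abs_lt_add_mul_of_forall_eq_zero (hh : Continuous h) (hφ : Continuous φ)
    (h_nonneg : ∀ x, 0 ≤ h x) (hφh : ∀ x, h x = 0 → φ x = 0) {ε : ℝ} (hε : 0 < ε) :
    ∃ C : ℕ, ∀ x, |φ x| < ε + C * h x := by
  have hmono : Monotone fun n : ℕ => {x | |φ x| < ε + n * h x} := by
    intro m n hmn x (hx : |φ x| < ε + m * h x)
    show |φ x| < ε + n * h x
    have : (m : ℝ) * h x ≤ n * h x :=
      mul_le_mul_of_nonneg_right (by exact_mod_cast hmn) (h_nonneg x)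
    exact hx.trans_le (by linarith)
  have hcover : Set.univ ⊆ ⋃ n : ℕ, {x | |φ x| < ε + n * h x} := by
    intro x _
    rcases (h_nonneg x).eq_or_lt with hx | hx
    · exact Set.mem_iUnion.2 ⟨0, by simp [hφh x hx.symm, hε]⟩
    · obtain ⟨n, hn⟩ := exists_nat_gt (|φ x| / h x)
      refine Set.mem_iUnion.2 ⟨n, ?_⟩
      have := (div_lt_iff₀ hx).1 hn
      show |φ x| < ε + n * h x
      linarith
  obtain ⟨C, hC⟩ := isCompact_univ.elim_directed_cover _
    (fun n => isOpen_lt hφ.abs (by fun_prop)) hcover hmono.directed_le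
  exact ⟨C, fun x => hC (Set.mem_univ x)⟩

variable [MeasurableSpace X] [OpensMeasurableSpace X]

theorem Continuous.integrable_of_compactSpace {E : Type*} [NormedAddCommGroup E] {f : X → E}
    (hf : Continuous f) (ν : Measure X) [IsFiniteMeasure ν] : Integrable f ν :=
  hf.integrable_of_hasCompactSupport (.of_compactSpace f)

theorem integral_sub_mul_sub_mul {f g₁ g₂ : X → ℝ} (hf : Continuous f) (hg₁ : Continuous g₁)
    (hg₂ : Continuous g₂) (a b : ℝ) (ν : Measure X) [IsFiniteMeasure ν] :
    ∫ x, (f x - a * g₁ x - b * g₂ x) ∂ν = ∫ x, f x ∂ν - a * ∫ x, g₁ x ∂ν - b * ∫ x, g₂ x ∂ν := by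
  rw [integral_sub, integral_sub, integral_const_mul, integral_const_mul]
  all_goals exact Continuous.integrable_of_compactSpace (by fun_prop) ν

theorem tendsto_integral_of_tendsto_integral_penalty {ι : Type*} {l : Filter ι}
    {ν : ι → Measure X} [∀ i, IsProbabilityMeasure (ν i)] (hh : Continuous h)
    (hφ : Continuous φ) (h_nonneg : ∀ x, 0 ≤ h x) (hφh : ∀ x, h x = 0 → φ x = 0)
    (hlim : Tendsto (fun i => ∫ x, h x ∂ν i) l (𝓝 0)) :
    Tendsto (fun i => ∫ x, φ x ∂ν i) l (𝓝 0) := by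
  rw [Metric.tendsto_nhds]
  intro ε hε
  obtain ⟨C, hC⟩ := exists_abs_lt_add_mul_of_forall_eq_zero hh hφ h_nonneg hφh (half_pos hε)
  have hbound : ∀ i, |∫ x, φ x ∂ν i| ≤ ε / 2 + C * ∫ x, h x ∂ν i := fun i =>
    calc |∫ x, φ x ∂ν i|
        ≤ ∫ x, |φ x| ∂ν i := abs_integral_le_integral_abs
      _ ≤ ∫ x, (ε / 2 + C * h x) ∂ν i :=
          integral_mono (hφ.abs.integrable_of_compactSpace _)
            ((integrable_const _).add ((hh.integrable_of_compactSpace _).const_mul _))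
            fun x => (hC x).le
      _ = ε / 2 + C * ∫ x, h x ∂ν i := by
          rw [integral_add (integrable_const _) ((hh.integrable_of_compactSpace _).const_mul _),
            integral_const_mul]
          simp
  have hCh : Tendsto (fun i => C * ∫ x, h x ∂ν i) l (𝓝 0) := by simpa using hlim.const_mul (C : ℝ)
  filter_upwards [hCh.eventually (gt_mem_nhds (half_pos hε))] with i hi
  rw [Real.dist_0_eq_abs]
  linarith [hbound i]

end Penalty

local notation "I" => Set.Icc (0 : ℝ) 1

noncomputable def disagreement (p : I × I) : ℝ := p.1 * (1 - p.2) + p.2 * (1 - p.1)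

theorem continuous_disagreement : Continuous disagreement := by
  unfold disagreement
  fun_prop

theorem disagreement_nonneg (p : I × I) : 0 ≤ disagreement p :=
  add_nonneg (mul_nonneg p.1.2.1 (sub_nonneg.2 p.2.2.2)) (mul_nonneg p.2.2.1 (sub_nonneg.2 p.1.2.2))

theorem eq_pt0_or_eq_pt1_of_disagreement_eq_zero {p : I × I} (hp : disagreement p = 0) :
    p = (pt0, pt0) ∨ p = (pt1, pt1) := by
  obtain ⟨⟨x, hx⟩, ⟨y, hy⟩⟩ := p
  rw [disagreement, add_eq_zero_iff_of_nonneg (mul_nonneg hx.1 (sub_nonneg.2 hy.2))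
    (mul_nonneg hy.1 (sub_nonneg.2 hx.2))] at hp
  simp only [mul_eq_zero, sub_eq_zero] at hp
  obtain ⟨rfl | rfl, _ | _⟩ := hp <;> simp_all [pt0, pt1]

theorem integral_disagreement (ν : Measure (I × I)) [IsProbabilityMeasure ν] :
    ∫ p, disagreement p ∂ν
      = 1 - ∫ p, (p.1 : ℝ) * p.2 ∂ν - ∫ p, (1 - (p.1 : ℝ)) * (1 - p.2) ∂ν := by
  have h := integral_sub_mul_sub_mul (f := fun _ : I × I => (1 : ℝ)) continuous_const
    (by fun_prop : Continuous fun p : I × I => (p.1 : ℝ) * p.2)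
    (by fun_prop : Continuous fun p : I × I => (1 - (p.1 : ℝ)) * (1 - p.2)) 1 1 ν
  simp only [integral_const, probReal_univ, one_mul, smul_eq_mul] at h
  rw [← h]
  congr with p
  simp only [disagreement]
  ring

theorem stmt15_general (θ : ℝ)
    (μ : ℕ → ProbabilityMeasure (Set.Icc (0 : ℝ) 1 × Set.Icc (0 : ℝ) 1))
    (hxy : Filter.Tendsto
      (fun n => ∫ p, ((p.1 : ℝ) * (p.2 : ℝ))
        ∂(μ n : Measure (Set.Icc (0 : ℝ) 1 × Set.Icc (0 : ℝ) 1)))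
      Filter.atTop (nhds θ))
    (hxy' : Filter.Tendsto
      (fun n => ∫ p, ((1 - (p.1 : ℝ)) * (1 - (p.2 : ℝ)))
        ∂(μ n : Measure (Set.Icc (0 : ℝ) 1 × Set.Icc (0 : ℝ) 1)))
      Filter.atTop (nhds (1 - θ))) :
    ∀ f : C(Set.Icc (0 : ℝ) 1 × Set.Icc (0 : ℝ) 1, ℝ),
      Filter.Tendsto
        (fun n => ∫ p, f p ∂(μ n : Measure (Set.Icc (0 : ℝ) 1 × Set.Icc (0 : ℝ) 1)))
        Filter.atTop (nhds ((1 - θ) * f (pt0, pt0) + θ * f (pt1, pt1))) := by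
  intro f
  have hg₀ : Continuous fun p : I × I => (1 - (p.1 : ℝ)) * (1 - p.2) := by fun_prop
  have hg₁ : Continuous fun p : I × I => (p.1 : ℝ) * p.2 := by fun_prop
  have hφ : Tendsto (fun n => ∫ p, (f p - f (pt0, pt0) * ((1 - (p.1 : ℝ)) * (1 - p.2))
      - f (pt1, pt1) * (p.1 * p.2)) ∂(μ n : Measure (I × I))) atTop (𝓝 0) := by
    refine tendsto_integral_of_tendsto_integral_penalty continuous_disagreement (by fun_prop)
      disagreement_nonneg (fun p hp => ?_) ?_
    · rcases eq_pt0_or_eq_pt1_of_disagreement_eq_zero hp with rfl | rfl <;> simp [pt0, pt1]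
    · simp_rw [integral_disagreement]
      simpa using (tendsto_const_nhds (x := (1 : ℝ)) |>.sub hxy).sub hxy'
  simp only [integral_sub_mul_sub_mul f.continuous hg₀ hg₁] at hφ
  convert (hφ.add (hxy'.const_mul (f (pt0, pt0)))).add (hxy.const_mul (f (pt1, pt1))) using 2 <;> ring

/-- Two-component clustering lemma. If probability measures `μ_n` on `[0,1]²` have first
marginal means converging to `θ`, first marginals converging weakly to
`(1−θ)δ_0 + θδ_1`, and `∫ xy dμ_n → θ`, `∫ (1−x)(1−y) dμ_n → 1−θ`, then
`μ_n ⇒ (1−θ)δ_{(0,0)} + θδ_{(1,1)}` (formulated via test functions). -/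
theorem stmt15 (θ : ℝ) (hθ : θ ∈ Set.Icc (0 : ℝ) 1)
    (μ : ℕ → ProbabilityMeasure (Set.Icc (0 : ℝ) 1 × Set.Icc (0 : ℝ) 1))
    (hmean : Filter.Tendsto
      (fun n => ∫ p, ((p.1 : ℝ)) ∂(μ n : Measure (Set.Icc (0 : ℝ) 1 × Set.Icc (0 : ℝ) 1)))
      Filter.atTop (nhds θ))
    (hmarg : ∀ f : C(Set.Icc (0 : ℝ) 1, ℝ),
      Filter.Tendsto
        (fun n => ∫ p, f p.1 ∂(μ n : Measure (Set.Icc (0 : ℝ) 1 × Set.Icc (0 : ℝ) 1)))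
        Filter.atTop (nhds ((1 - θ) * f pt0 + θ * f pt1)))
    (hxy : Filter.Tendsto
      (fun n => ∫ p, ((p.1 : ℝ) * (p.2 : ℝ))
        ∂(μ n : Measure (Set.Icc (0 : ℝ) 1 × Set.Icc (0 : ℝ) 1)))
      Filter.atTop (nhds θ))
    (hxy' : Filter.Tendsto
      (fun n => ∫ p, ((1 - (p.1 : ℝ)) * (1 - (p.2 : ℝ)))
        ∂(μ n : Measure (Set.Icc (0 : ℝ) 1 × Set.Icc (0 : ℝ) 1)))
      Filter.atTop (nhds (1 - θ))) :
    ∀ f : C(Set.Icc (0 : ℝ) 1 × Set.Icc (0 : ℝ) 1, ℝ),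
      Filter.Tendsto
        (fun n => ∫ p, f p ∂(μ n : Measure (Set.Icc (0 : ℝ) 1 × Set.Icc (0 : ℝ) 1)))
        Filter.atTop (nhds ((1 - θ) * f (pt0, pt0) + θ * f (pt1, pt1))) :=
  stmt15_general θ μ hxy hxy'
end

section
/- Let K ∈ (1,∞), c ∈ (0,∞) with Kc < 1, and set E_k = (K−1)/(K^k + K − 2), c_k = c^k, e_k = e^k with c < Ke. Then A_n = (1/2) Σ_{k=0}^{n-1} (E_k/c_k)·(E_k c_k + e_k)/((E_k c_k + e_k) + E_k K^k e_k) satisfies A_n ~ ((K−1)/(2K(1−Kc))) (Kc)^{−(n−1)} as n → ∞. -/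
/-!
Multiplied by `(K c) ^ k`, the `k`-th summand tends to `(K - 1) / K`: indeed `E_k K ^ k → K - 1`,
while `c < K e` makes the migration part `E_k c ^ k` negligible against the exchange part `e ^ k`.
As `K c < 1`, the summands grow geometrically at rate `(K c)⁻¹`, so by Stolz–Cesàro their partial
sums are asymptotic to `(K - 1) / K · (K c) ^ (-(n - 1)) · (1 + K c + (K c) ^ 2 + ⋯)`.
-/

open Filter Finset Topology Asymptotics

theorem tendsto_sum_range_div_sum_range_of_tendsto_div {u w : ℕ → ℝ} {L : ℝ}
    (hw : ∀ k, 0 < w k) (hw_sum : Tendsto (fun n => ∑ k ∈ range n, w k) atTop atTop)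
    (h : Tendsto (fun k => u k / w k) atTop (𝓝 L)) :
    Tendsto (fun n => (∑ k ∈ range n, u k) / ∑ k ∈ range n, w k) atTop (𝓝 L) := by
  have hlo : (fun k => u k - L * w k) =o[atTop] w := by
    rw [isLittleO_iff_tendsto fun k hk => absurd hk (hw k).ne']
    refine (tendsto_sub_nhds_zero_iff.mpr h).congr fun k => ?_
    rw [sub_div, mul_div_cancel_right₀ _ (hw k).ne']
  have hsum := (hlo.sum_range (fun k => (hw k).le) hw_sum).tendsto_div_nhds_zero
  rw [← zero_add L]
  refine (hsum.add_const L).congr' ?_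
  filter_upwards [hw_sum.eventually_gt_atTop 0] with n hn
  rw [sum_sub_distrib, ← mul_sum, sub_div, mul_div_cancel_right₀ _ hn.ne', sub_add_cancel]

theorem sum_range_inv_pow_mul_pow {q : ℝ} (hq : q ≠ 0) (n : ℕ) :
    (∑ k ∈ range n, q⁻¹ ^ k) * q ^ (n - 1) = ∑ k ∈ range n, q ^ k := by
  rw [sum_mul, ← sum_range_reflect (fun k => q ^ k)]
  refine sum_congr rfl fun k hk => ?_
  rw [inv_pow, ← div_eq_inv_mul, div_eq_iff (pow_ne_zero _ hq), ← pow_add]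
  congr 1
  have := mem_range.mp hk
  omega

theorem tendsto_sum_range_mul_pow_of_tendsto_mul_pow {u : ℕ → ℝ} {q L : ℝ} (hq₀ : 0 < q)
    (hq₁ : q < 1) (hu : Tendsto (fun k => u k * q ^ k) atTop (𝓝 L)) :
    Tendsto (fun n => (∑ k ∈ range n, u k) * q ^ (n - 1)) atTop (𝓝 (L / (1 - q))) := by
  have hw : ∀ k, 0 < q⁻¹ ^ k := fun k => pow_pos (inv_pos.mpr hq₀) k
  have hw_sum : Tendsto (fun n => ∑ k ∈ range n, q⁻¹ ^ k) atTop atTop := by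
    refine (not_summable_iff_tendsto_nat_atTop_of_nonneg fun k => (hw k).le).mp ?_
    rw [summable_geometric_iff_norm_lt_one, Real.norm_of_nonneg (inv_pos.mpr hq₀).le]
    exact not_lt.mpr (one_le_inv₀ hq₀ |>.mpr hq₁.le)
  have hratio := tendsto_sum_range_div_sum_range_of_tendsto_div hw hw_sum
    (hu.congr fun k => by rw [inv_pow, div_inv_eq_mul])
  have hgeom := (hasSum_geometric_of_lt_one hq₀.le hq₁).tendsto_sum_nat
  rw [div_eq_mul_inv]
  refine (hratio.mul hgeom).congr' ?_
  filter_upwards [hw_sum.eventually_gt_atTop 0] with n hn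
  rw [← sum_range_inv_pow_mul_pow hq₀.ne', ← mul_assoc, div_mul_cancel₀ _ hn.ne']

theorem tendsto_div_pow_add_mul_pow {K : ℝ} (hK : 1 < K) (a b : ℝ) :
    Tendsto (fun k : ℕ => b / (K ^ k + a) * K ^ k) atTop (𝓝 b) := by
  have hdecay := tendsto_pow_atTop_nhds_zero_of_lt_one (inv_pos.mpr (zero_lt_one.trans hK)).le
    (inv_lt_one_of_one_lt₀ hK)
  have hlim := tendsto_const_nhds (x := b).div
    ((hdecay.const_mul a).const_add 1) (by simp)
  simp only [mul_zero, add_zero, div_one] at hlim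
  refine hlim.congr fun k => ?_
  have hKk : K ^ k ≠ 0 := pow_ne_zero _ (zero_lt_one.trans hK).ne'
  rw [Pi.div_apply, inv_pow, ← div_eq_mul_inv, one_add_div hKk, div_div_eq_mul_div,
    div_mul_eq_mul_div]

theorem tendsto_summand_mul_pow {K c e M : ℝ} {E : ℕ → ℝ} (hK : 0 < K) (hc : 0 < c) (he : 0 < e)
    (hce : c < K * e) (hM : 1 + M ≠ 0) (hE : Tendsto (fun k => E k * K ^ k) atTop (𝓝 M)) :
    Tendsto (fun k => (E k / c ^ k) *
        ((E k * c ^ k + e ^ k) / ((E k * c ^ k + e ^ k) + E k * K ^ k * e ^ k)) * (K * c) ^ k)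
      atTop (𝓝 (M / (1 + M))) := by
  have hdecay := tendsto_pow_atTop_nhds_zero_of_lt_one (by positivity : 0 ≤ c / (K * e))
    ((div_lt_one (mul_pos hK he)).mpr hce)
  -- Dividing by `e ^ k`, the summand times `(K c) ^ k` is `f (x + 1) / ((x + 1) + f)` with
  -- `f = E k K ^ k → M` and `x = E k c ^ k / e ^ k = f (c / (K e)) ^ k → 0`.
  have hx := hE.mul hdecay
  rw [mul_zero] at hx
  have hlim := hE.mul ((hx.add_const 1).div ((hx.add_const 1).add hE) (by simpa using hM))
  simp only [zero_add, ← div_eq_mul_one_div] at hlim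
  refine hlim.congr fun k => ?_
  simp only [Pi.div_apply, div_pow, mul_pow]
  field_simp

/-- Pure exponential regime with `K > 1`, `Kc < 1`, `c < Ke`: with
`E_k = (K−1)/(K^k + K − 2)`, `c_k = c^k`, `e_k = e^k`, the clustering scale
`A_n = (1/2) Σ_{k<n} (E_k/c_k)(E_k c_k + e_k)/((E_k c_k + e_k) + E_k K^k e_k)`
satisfies `A_n ~ ((K−1)/(2K(1−Kc))) (Kc)^{−(n−1)}` as `n → ∞`. -/
theorem stmt16 (K c e : ℝ) (hK : 1 < K) (hc : 0 < c) (hKc : K * c < 1)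
    (he : 0 < e) (hce : c < K * e)
    (E : ℕ → ℝ) (hE : ∀ k, E k = (K - 1) / (K ^ k + K - 2))
    (A : ℕ → ℝ)
    (hA : ∀ n, A n = (1 / 2) * ∑ k ∈ Finset.range n,
      (E k / c ^ k) * ((E k * c ^ k + e ^ k) / ((E k * c ^ k + e ^ k) + E k * K ^ k * e ^ k))) :
    Filter.Tendsto
      (fun n : ℕ => A n / (((K - 1) / (2 * K * (1 - K * c))) * ((K * c) ^ (n - 1))⁻¹))
      Filter.atTop (nhds 1) := by
  have hK₀ : 0 < K := zero_lt_one.trans hK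
  have hEK : Tendsto (fun k => E k * K ^ k) atTop (𝓝 (K - 1)) := by
    simpa only [hE, add_sub_assoc] using tendsto_div_pow_add_mul_pow hK (K - 2) (K - 1)
  have hsummand := tendsto_summand_mul_pow hK₀ hc he hce (by linarith) hEK
  rw [add_sub_cancel] at hsummand
  have hsum := tendsto_sum_range_mul_pow_of_tendsto_mul_pow (mul_pos hK₀ hc) hKc hsummand
  have hlim := (hsum.const_mul (1 / 2)).div_const ((K - 1) / (2 * K * (1 - K * c)))
  convert hlim using 2 with n
  · rw [hA, div_mul_eq_div_div, div_inv_eq_mul]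
    ring
  · have hK₁ : K - 1 ≠ 0 := by linarith
    have h1Kc : 1 - K * c ≠ 0 := by linarith
    field_simp
end
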